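/- If a simple object p of M(X) has nonzero multiplicity in the vacuum object V_K, then its twist eigenvalue ω_p = (1/d_p) Σ_{m∈X₂} ψ_p(m, ∂m) equals 1. -/

import Mathlib

/-- A crossed module: groups `X₁`, `X₂`, a right action of `X₁` on `X₂` by group
automorphisms (written `act m g` for `m^g`), and a boundary homomorphism
`δ : X₂ →* X₁` satisfying equivariance and the Peiffer identity. -/
structure CrossedModule (X₁ X₂ : Type) [Group X₁] [Group X₂] where
  act : X₂ → X₁ → X₂
  act_one : ∀ m : X₂, act m 1 = m
  act_mul : ∀ (m : X₂) (g h : X₁), act m (g * h) = act (act m g) h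
  act_hom : ∀ (m n : X₂) (g : X₁), act (m * n) g = act m g * act n g
  δ : X₂ →* X₁
  equivariance : ∀ (m : X₂) (g : X₁), δ (act m g) = g⁻¹ * δ m * g
  peiffer : ∀ m n : X₂, act m (δ n) = n⁻¹ * m * n

section Representations
open TensorProduct

variable {F : Type} [Field F] {X₁ X₂ : Type} [Group X₁] [Group X₂] [Fintype X₂] [DecidableEq X₂]

/-- A representation of the crossed module `X` on the `F`-vector space `V`:
an `X₂`-grading, encoded by the family of projections `P m` onto the graded
components, together with an `X₁`-action `Q` such that `P(m)Q(g) = Q(g)P(m^g)`.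
These are the objects of the category `M(X)`. -/
structure XRep (F : Type) [Field F] {X₁ X₂ : Type} [Group X₁] [Group X₂] [Fintype X₂] [DecidableEq X₂]
    (X : CrossedModule X₁ X₂)
    (V : Type) [AddCommGroup V] [Module F V] where
  P : X₂ → (V →ₗ[F] V)
  Q : X₁ → (V →ₗ[F] V)
  P_orth : ∀ m n : X₂, (P m) ∘ₗ (P n) = if m = n then P m else 0
  P_total : (∑ m : X₂, P m) = LinearMap.id
  Q_one : Q 1 = LinearMap.id
  Q_mul : ∀ g h : X₁, Q (g * h) = Q g ∘ₗ Q h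
  PQ_compat : ∀ (m : X₂) (g : X₁), (P m) ∘ₗ (Q g) = (Q g) ∘ₗ (P (X.act m g))

variable {X : CrossedModule X₁ X₂}
variable {U V W U' V' W' : Type}
  [AddCommGroup U] [Module F U] [AddCommGroup V] [Module F V] [AddCommGroup W] [Module F W]
  [AddCommGroup U'] [Module F U'] [AddCommGroup V'] [Module F V'] [AddCommGroup W'] [Module F W']

/-- The grading of the tensor product: `(V ⊗ W)_m = ⊕_{nl = m} V_n ⊗ W_l`. -/
noncomputable def tensorP (A : XRep F X V) (B : XRep F X W) (m : X₂) :
    (V ⊗[F] W) →ₗ[F] (V ⊗[F] W) :=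
  ∑ n : X₂, TensorProduct.map (A.P n) (B.P (n⁻¹ * m))

/-- The diagonal `X₁`-action on the tensor product. -/
noncomputable def tensorQ (A : XRep F X V) (B : XRep F X W) (g : X₁) :
    (V ⊗[F] W) →ₗ[F] (V ⊗[F] W) :=
  TensorProduct.map (A.Q g) (B.Q g)

/-- The braiding `R_{V,W}(v ⊗ w) = ∑_{m ∈ X₂} Q_W(∂m) w ⊗ P_V(m) v`, written in terms
of the grading data `PA` on `V` and the action data `QB` on `W`. -/
noncomputable def braidAux (X : CrossedModule X₁ X₂)
    (PA : X₂ → (V →ₗ[F] V)) (QB : X₁ → (W →ₗ[F] W)) :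
    (V ⊗[F] W) →ₗ[F] (W ⊗[F] V) :=
  ∑ m : X₂, (TensorProduct.map (QB (X.δ m)) (PA m)) ∘ₗ
    (TensorProduct.comm F V W).toLinearMap

/-- The braiding `R_{V,W}` between two crossed-module representations. -/
noncomputable def braid (A : XRep F X V) (B : XRep F X W) :
    (V ⊗[F] W) →ₗ[F] (W ⊗[F] V) :=
  braidAux X A.P B.Q

/-- Morphisms in `M(X)`: linear maps compatible with the grading and the action. -/
def IsXRepHom (A : XRep F X V) (B : XRep F X W) (f : V →ₗ[F] W) : Prop :=
  (∀ m : X₂, f ∘ₗ A.P m = B.P m ∘ₗ f) ∧ (∀ g : X₁, f ∘ₗ A.Q g = B.Q g ∘ₗ f)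

end Representations

section Vacuum

variable (F : Type) [Field F] {X₁ X₂ : Type} [Group X₁] [Group X₂]
  [Fintype X₁] [Fintype X₂] [DecidableEq X₂]
  (X : CrossedModule X₁ X₂) [X.δ.range.Normal]

/-- The underlying vector space `k[ker ∂] ⊗ k(coker ∂)` of the vacuum object,
realized as the space of `F`-valued functions on `(ker ∂) × (coker ∂)`;
the basis vector `x ⊗ δ_{Iy}` corresponds to the indicator function of `(x, Iy)`. -/
abbrev VacuumCarrier : Type := (X.δ.ker × (X₁ ⧸ X.δ.range)) → F

/-- The grading projections of the vacuum object,
`P(m)(x ⊗ δ_{Iy}) = δ(m^y, x) (x ⊗ δ_{Iy})`, defined via a choice of coset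
representative. -/
noncomputable def vacuumP (m : X₂) : VacuumCarrier F X →ₗ[F] VacuumCarrier F X where
  toFun f := fun p => if X.act m (Quotient.out p.2) = (p.1 : X₂) then f p else 0
  map_add' f g := by funext p; by_cases h : X.act m (Quotient.out p.2) = (p.1 : X₂) <;> simp [h]
  map_smul' c f := by funext p; by_cases h : X.act m (Quotient.out p.2) = (p.1 : X₂) <;> simp [h]

/-- The `X₁`-action of the vacuum object, `Q(g)(x ⊗ δ_{Iy}) = x ⊗ δ_{Igy}`. -/
def vacuumQ (g : X₁) : VacuumCarrier F X →ₗ[F] VacuumCarrier F X where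
  toFun f := fun p => f (p.1, (QuotientGroup.mk g)⁻¹ * p.2)
  map_add' f g := by funext p; simp
  map_smul' c f := by funext p; simp

end Vacuum

section Simple

variable {F : Type} [Field F] {X₁ X₂ : Type} [Group X₁] [Group X₂]
  [Fintype X₁] [Fintype X₂] [DecidableEq X₂] {X : CrossedModule X₁ X₂}
  {V : Type} [AddCommGroup V] [Module F V]

/-- A representation of a crossed module is simple if it is nonzero and has no
nontrivial invariant subspace. -/
def XRep.IsSimple (A : XRep F X V) : Prop :=
  Nontrivial V ∧
  ∀ S : Submodule F V,
    (∀ m : X₂, S.map (A.P m) ≤ S) → (∀ g : X₁, S.map (A.Q g) ≤ S) →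
    S = ⊥ ∨ S = ⊤

/-- `A` is a direct summand (retract) of the vacuum object `V_K`. -/
def IsVacuumSummand [X.δ.range.Normal] (A : XRep F X V) : Prop :=
  ∃ (ι : V →ₗ[F] VacuumCarrier F X) (π : VacuumCarrier F X →ₗ[F] V),
    (∀ m : X₂, ι ∘ₗ A.P m = vacuumP F X m ∘ₗ ι) ∧
    (∀ g : X₁, ι ∘ₗ A.Q g = vacuumQ F X g ∘ₗ ι) ∧
    (∀ m : X₂, π ∘ₗ vacuumP F X m = A.P m ∘ₗ π) ∧
    (∀ g : X₁, π ∘ₗ vacuumQ F X g = A.Q g ∘ₗ π) ∧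
    π ∘ₗ ι = LinearMap.id

end Simple

section HomVacuum

variable {F : Type} [Field F] {X₁ X₂ : Type} [Group X₁] [Group X₂]
  [Fintype X₁] [Fintype X₂] [DecidableEq X₂] {X : CrossedModule X₁ X₂}
  {V : Type} [AddCommGroup V] [Module F V]

/-- The space `Hom_{M(X)}(A, V_K)` of morphisms from `A` to the vacuum object,
as a linear subspace of the space of all linear maps; its dimension is the
multiplicity `μ_p` of `A = p` in `V_K`. -/
def homToVacuum [X.δ.range.Normal] (A : XRep F X V) :
    Submodule F (V →ₗ[F] VacuumCarrier F X) where
  carrier := {f | (∀ m : X₂, f ∘ₗ A.P m = vacuumP F X m ∘ₗ f) ∧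
    (∀ g : X₁, f ∘ₗ A.Q g = vacuumQ F X g ∘ₗ f)}
  add_mem' := by
    intro f g hf hg
    exact ⟨fun m => by rw [LinearMap.add_comp, LinearMap.comp_add, hf.1 m, hg.1 m],
      fun k => by rw [LinearMap.add_comp, LinearMap.comp_add, hf.2 k, hg.2 k]⟩
  zero_mem' := ⟨fun m => by simp, fun g => by simp⟩
  smul_mem' := by
    intro c f hf
    exact ⟨fun m => by rw [LinearMap.smul_comp, LinearMap.comp_smul, hf.1 m],
      fun k => by rw [LinearMap.smul_comp, LinearMap.comp_smul, hf.2 k]⟩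

end HomVacuum

/-! The twist `θ = ∑ₘ P(m) Q(∂m)` commutes with every morphism of representations. On `V_K` it is
the identity: `∂m` lies in the image of `∂`, so it acts trivially on `coker ∂`, and the grading
projections sum to the identity. A nonzero morphism `p → V_K` has an invariant kernel, hence is
injective when `p` is simple; therefore `θ_p = id`, and its trace `∑ₘ ψ_p(m, ∂m)` is `d_p`. -/

theorem CrossedModule.act_eq_iff {X₁ X₂ : Type} [Group X₁] [Group X₂] (X : CrossedModule X₁ X₂)
    (m n : X₂) (g : X₁) : X.act m g = n ↔ m = X.act n g⁻¹ := by
  constructor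
  · rintro rfl
    rw [← X.act_mul, mul_inv_cancel, X.act_one]
  · rintro rfl
    rw [← X.act_mul, inv_mul_cancel, X.act_one]

theorem map_ker_le_ker_of_comp_eq {R V W : Type} [Semiring R] [AddCommMonoid V] [Module R V]
    [AddCommMonoid W] [Module R W] {f : V →ₗ[R] W} {T : Module.End R V} {T' : Module.End R W}
    (h : f ∘ₗ T = T' ∘ₗ f) : (LinearMap.ker f).map T ≤ LinearMap.ker f := by
  rw [Submodule.map_le_iff_le_comap, ← LinearMap.ker_comp, h]
  exact LinearMap.ker_le_ker_comp f T'

section Twist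

variable {F : Type} [Field F] {X₁ X₂ : Type} [Group X₁] [Group X₂] (X : CrossedModule X₁ X₂)

theorem vacuumQ_δ [X.δ.range.Normal] (m : X₂) : vacuumQ F X (X.δ m) = LinearMap.id := by
  have hmk : (QuotientGroup.mk (X.δ m) : X₁ ⧸ X.δ.range) = 1 :=
    (QuotientGroup.eq_one_iff _).mpr ⟨m, rfl⟩
  ext f p
  simp [vacuumQ, hmk]

variable [Fintype X₂]

noncomputable def twistOf {W : Type} [AddCommGroup W] [Module F W]
    (P : X₂ → Module.End F W) (Q : X₁ → Module.End F W) : Module.End F W :=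
  ∑ m : X₂, P m ∘ₗ Q (X.δ m)

theorem comp_twistOf_eq {V W : Type} [AddCommGroup V] [Module F V] [AddCommGroup W] [Module F W]
    {P : X₂ → Module.End F V} {Q : X₁ → Module.End F V}
    {P' : X₂ → Module.End F W} {Q' : X₁ → Module.End F W} {f : V →ₗ[F] W}
    (hP : ∀ m, f ∘ₗ P m = P' m ∘ₗ f) (hQ : ∀ g, f ∘ₗ Q g = Q' g ∘ₗ f) :
    f ∘ₗ twistOf X P Q = twistOf X P' Q' ∘ₗ f := by
  ext v
  simp only [twistOf, LinearMap.comp_apply, LinearMap.sum_apply, map_sum]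
  refine Finset.sum_congr rfl fun m _ => ?_
  rw [← LinearMap.comp_apply f, hP m, LinearMap.comp_apply, ← LinearMap.comp_apply f, hQ,
    LinearMap.comp_apply]

variable [DecidableEq X₂]

/-- Each basis vector `x ⊗ δ_{Iy}` lies in exactly one graded component, namely `m = x^{y⁻¹}`. -/
theorem sum_vacuumP : ∑ m : X₂, vacuumP F X m = LinearMap.id := by
  ext f p
  simp only [LinearMap.coe_sum, Finset.sum_apply, vacuumP, LinearMap.coe_mk, AddHom.coe_mk,
    X.act_eq_iff, Finset.sum_ite_eq', Finset.mem_univ, if_true, LinearMap.id_coe, id_eq]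

theorem twistOf_vacuum [X.δ.range.Normal] :
    twistOf X (vacuumP F X) (vacuumQ F X) = LinearMap.id := by
  simp only [twistOf, vacuumQ_δ, LinearMap.comp_id, sum_vacuumP]

end Twist

section Simple

variable {F : Type} [Field F] {X₁ X₂ : Type} [Group X₁] [Group X₂] [Fintype X₂] [DecidableEq X₂]
  {X : CrossedModule X₁ X₂} {V W : Type} [AddCommGroup V] [Module F V]
  [AddCommGroup W] [Module F W]

theorem XRep.IsSimple.injective_of_comp_eq {A : XRep F X V} (hA : A.IsSimple)
    {P' : X₂ → Module.End F W} {Q' : X₁ → Module.End F W} {f : V →ₗ[F] W}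
    (hP : ∀ m, f ∘ₗ A.P m = P' m ∘ₗ f) (hQ : ∀ g, f ∘ₗ A.Q g = Q' g ∘ₗ f) (hf : f ≠ 0) :
    Function.Injective f := by
  rw [← LinearMap.ker_eq_bot]
  exact (hA.2 _ (fun m => map_ker_le_ker_of_comp_eq (hP m))
    (fun g => map_ker_le_ker_of_comp_eq (hQ g))).resolve_right
    fun htop => hf (LinearMap.ker_eq_top.mp htop)

theorem XRep.IsSimple.twistOf_eq_id_of_hom_vacuum [X.δ.range.Normal] {A : XRep F X V}
    (hA : A.IsSimple) {f : V →ₗ[F] VacuumCarrier F X} (hf : f ∈ homToVacuum A) (hf0 : f ≠ 0) :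
    twistOf X A.P A.Q = LinearMap.id := by
  have hinj := hA.injective_of_comp_eq hf.1 hf.2 hf0
  rw [← LinearMap.cancel_left hinj, comp_twistOf_eq X hf.1 hf.2, twistOf_vacuum,
    LinearMap.id_comp, LinearMap.comp_id]

end Simple

theorem twist_of_vacuum_summand_general {F : Type} [Field F]
    {X₁ X₂ : Type} [Group X₁] [Group X₂] [Fintype X₂] [DecidableEq X₂]
    {X : CrossedModule X₁ X₂} [X.δ.range.Normal]
    {V : Type} [AddCommGroup V] [Module F V] [FiniteDimensional F V]
    (A : XRep F X V) (hA : A.IsSimple)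
    (hmul : Module.finrank F (homToVacuum A) ≠ 0) :
    (∑ m : X₂, LinearMap.trace F V (A.P m ∘ₗ A.Q (X.δ m))) =
      (Module.finrank F V : F) := by
  have : Nontrivial (homToVacuum A) := Module.nontrivial_of_finrank_pos (Nat.pos_of_ne_zero hmul)
  obtain ⟨⟨f, hf⟩, hf0⟩ := exists_ne (0 : homToVacuum A)
  have htwist := hA.twistOf_eq_id_of_hom_vacuum hf fun h => hf0 (Subtype.ext h)
  rw [← map_sum, ← twistOf, htwist, LinearMap.trace_id]

/-- If a simple object `p` of `M(X)` has nonzero multiplicity in the vacuum object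
`V_K`, then its twist eigenvalue `ω_p = (1/d_p) ∑_{m ∈ X₂} ψ_p(m, ∂m)` equals `1`,
where `ψ_p(m, g) = tr(P(m)Q(g))`; equivalently `∑_{m ∈ X₂} ψ_p(m, ∂m) = d_p`. -/
theorem twist_of_vacuum_summand {F : Type} [Field F] [IsAlgClosed F] [CharZero F]
    {X₁ X₂ : Type} [Group X₁] [Group X₂] [Fintype X₁] [Fintype X₂] [DecidableEq X₂]
    {X : CrossedModule X₁ X₂} [X.δ.range.Normal]
    {V : Type} [AddCommGroup V] [Module F V] [FiniteDimensional F V]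
    (A : XRep F X V) (hA : A.IsSimple)
    (hmul : Module.finrank F (homToVacuum A) ≠ 0) :
    (∑ m : X₂, LinearMap.trace F V (A.P m ∘ₗ A.Q (X.δ m))) =
      (Module.finrank F V : F) :=
  twist_of_vacuum_summand_general A hA hmul
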